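/- If G is a domination-game critical graph, then G is either a minus graph or an equal graph; that is, γ_g′(G) ≤ γ_g(G). -/

import Mathlib

/-!
Whatever vertex `x` Staller opens the S-game with, the game continues as the D-game on `G|N[x]`.
By the continuation principle this lasts no longer than the D-game on `G|x`, which by criticality
is shorter than the D-game on `G`; hence `γ_g'(G) ≤ γ_g(G)`. The continuation principle is proved
by simultaneous induction with its "pass" version, needed when a move that Dominator would make
in the game with fewer dominated vertices is no longer legal in the other one.
-/

open Finset

namespace DomGame

open scoped Classical

noncomputable section

variable {V : Type*}

/-- The closed neighborhood of `x` in `G`, as a `Finset`. -/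
def closedNbr (G : SimpleGraph V) [Fintype V] (x : V) : Finset V :=
  Finset.univ.filter (fun y => y = x ∨ G.Adj x y)

lemma card_compl_lt (G : SimpleGraph V) [Fintype V] {S : Finset V} {x : V}
    (h : ¬ closedNbr G x ⊆ S) :
    (Finset.univ \ (S ∪ closedNbr G x)).card < (Finset.univ \ S).card := by
  obtain ⟨v, hvN, hvS⟩ := Finset.not_subset.mp h
  apply Finset.card_lt_card
  have hsub : Finset.univ \ (S ∪ closedNbr G x) ⊆ Finset.univ \ S := by
    intro y hy
    simp only [Finset.mem_sdiff, Finset.mem_univ, Finset.mem_union, true_and, not_or] at hy ⊢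
    exact hy.1
  exact (Finset.ssubset_iff_of_subset hsub).mpr ⟨v, by simp [hvS], by simp [hvN]⟩

/-- The value of the (partially dominated) domination game on `G|S`, with
`dom = true` meaning Dominator moves next, `dom = false` meaning Staller moves next.
A legal move is a vertex whose closed neighborhood contains a yet undominated vertex;
Dominator minimizes, Staller maximizes the total number of moves. -/
def gameVal (G : SimpleGraph V) [Fintype V] (dom : Bool) (S : Finset V) : ℕ :=
  let moves := Finset.univ.filter (fun x => ¬ closedNbr G x ⊆ S)
  if h : moves.Nonempty then
    if dom then
      moves.attach.inf' (by simpa using h)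
        (fun x => 1 + gameVal G false (S ∪ closedNbr G x.1))
    else
      moves.attach.sup' (by simpa using h)
        (fun x => 1 + gameVal G true (S ∪ closedNbr G x.1))
  else 0
termination_by (Finset.univ \ S).card
decreasing_by
  · exact card_compl_lt G (by simpa using (Finset.mem_filter.mp x.2).2)
  · exact card_compl_lt G (by simpa using (Finset.mem_filter.mp x.2).2)

/-- The D-game domination number `γ_g(G)`. -/
def gammaD (G : SimpleGraph V) [Fintype V] : ℕ := gameVal G true ∅

/-- The S-game domination number `γ_g'(G)`. -/
def gammaS (G : SimpleGraph V) [Fintype V] : ℕ := gameVal G false ∅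

/-- Value of the Staller-pass domination game on `G|S`: Staller may skip
(at most) one move during the game; the skipped turn is not counted.
`dom` tells whose turn it is, `canPass` whether Staller's pass is still available. -/
def spVal (G : SimpleGraph V) [Fintype V] (dom : Bool) (canPass : Bool) (S : Finset V) : ℕ :=
  let moves := Finset.univ.filter (fun x => ¬ closedNbr G x ⊆ S)
  if h : moves.Nonempty then
    if dom then
      moves.attach.inf' (by simpa using h)
        (fun x => 1 + spVal G false canPass (S ∪ closedNbr G x.1))
    else
      if hc : canPass then
        max (moves.attach.sup' (by simpa using h)
              (fun x => 1 + spVal G true canPass (S ∪ closedNbr G x.1)))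
            (spVal G true false S)
      else
        moves.attach.sup' (by simpa using h)
          (fun x => 1 + spVal G true canPass (S ∪ closedNbr G x.1))
  else 0
termination_by ((Finset.univ \ S).card, if canPass then 1 else 0)
decreasing_by
  · exact Prod.Lex.left _ _ (card_compl_lt G (by simpa using (Finset.mem_filter.mp x.2).2))
  · exact Prod.Lex.left _ _ (card_compl_lt G (by simpa using (Finset.mem_filter.mp x.2).2))
  · simp only [hc, if_true]
    exact Prod.Lex.right _ (by norm_num)
  · exact Prod.Lex.left _ _ (card_compl_lt G (by simpa using (Finset.mem_filter.mp x.2).2))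

/-- Value of the Dominator-pass domination game on `G|S`: Dominator may skip
(at most) one move during the game; the skipped turn is not counted. -/
def dpVal (G : SimpleGraph V) [Fintype V] (dom : Bool) (canPass : Bool) (S : Finset V) : ℕ :=
  let moves := Finset.univ.filter (fun x => ¬ closedNbr G x ⊆ S)
  if h : moves.Nonempty then
    if dom then
      if hc : canPass then
        min (moves.attach.inf' (by simpa using h)
              (fun x => 1 + dpVal G false canPass (S ∪ closedNbr G x.1)))
            (dpVal G false false S)
      else
        moves.attach.inf' (by simpa using h)
          (fun x => 1 + dpVal G false canPass (S ∪ closedNbr G x.1))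
    else
      moves.attach.sup' (by simpa using h)
        (fun x => 1 + dpVal G true canPass (S ∪ closedNbr G x.1))
  else 0
termination_by ((Finset.univ \ S).card, if canPass then 1 else 0)
decreasing_by
  · exact Prod.Lex.left _ _ (card_compl_lt G (by simpa using (Finset.mem_filter.mp x.2).2))
  · simp only [hc, if_true]
    exact Prod.Lex.right _ (by norm_num)
  · exact Prod.Lex.left _ _ (card_compl_lt G (by simpa using (Finset.mem_filter.mp x.2).2))
  · exact Prod.Lex.left _ _ (card_compl_lt G (by simpa using (Finset.mem_filter.mp x.2).2))

/-- The graph `G_{uv}`: obtained from `G - uv` by adding two new vertices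
`u' = Sum.inr false` and `v' = Sum.inr true` together with the edges `u v'` and `v u'`. -/
def cutGraph (G : SimpleGraph V) (u v : V) : SimpleGraph (V ⊕ Bool) :=
  SimpleGraph.fromRel (fun x y =>
    match x, y with
    | Sum.inl a, Sum.inl b => G.Adj a b ∧ ¬ (a = u ∧ b = v) ∧ ¬ (a = v ∧ b = u)
    | Sum.inl a, Sum.inr b => (b = false ∧ a = v) ∨ (b = true ∧ a = u)
    | _, _ => False)

/-- The set of vertices of `G_{uv}` declared dominated, given that `B ⊆ V(G)` is
declared dominated: `B` together with the two new vertices `u'` and `v'`. -/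
def cutDom [DecidableEq V] (B : Finset V) : Finset (V ⊕ Bool) :=
  B.image Sum.inl ∪ {Sum.inr false, Sum.inr true}

/-- Disjoint union of two simple graphs. -/
def disjUnion {α β : Type*} (G : SimpleGraph α) (H : SimpleGraph β) :
    SimpleGraph (α ⊕ β) :=
  SimpleGraph.fromRel (fun x y =>
    match x, y with
    | Sum.inl a, Sum.inl b => G.Adj a b
    | Sum.inr a, Sum.inr b => H.Adj a b
    | _, _ => False)

/-- The disjoint union of `k` paths, the `i`-th on `size i` vertices
(consecutive vertices of each `Fin (size i)` being adjacent). -/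
def sigmaPathGraph (k : ℕ) (size : Fin k → ℕ) :
    SimpleGraph (Σ i : Fin k, Fin (size i)) :=
  SimpleGraph.fromRel (fun x y => x.1 = y.1 ∧ x.2.val + 1 = y.2.val)

/-- Vertex set of the three-legged spider `T_{p,q,r}`:
the center together with three legs on `4p`, `4q` and `4r` vertices. -/
abbrev SpiderV (p q r : ℕ) := Unit ⊕ (Fin (4*p) ⊕ (Fin (4*q) ⊕ Fin (4*r)))

/-- The three-legged spider `T_{p,q,r}`, obtained from paths `P_{4p+1}`, `P_{4q+1}`,
`P_{4r+1}` by identifying one end-vertex of each into the center. In each leg,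
vertex `0` is adjacent to the center, and vertices `i`, `i+1` are adjacent. -/
def spider (p q r : ℕ) : SimpleGraph (SpiderV p q r) :=
  SimpleGraph.fromRel (fun x y =>
    match x, y with
    | Sum.inl _, Sum.inr (Sum.inl i) => i.val = 0
    | Sum.inl _, Sum.inr (Sum.inr (Sum.inl i)) => i.val = 0
    | Sum.inl _, Sum.inr (Sum.inr (Sum.inr i)) => i.val = 0
    | Sum.inr (Sum.inl i), Sum.inr (Sum.inl j) => i.val + 1 = j.val
    | Sum.inr (Sum.inr (Sum.inl i)), Sum.inr (Sum.inr (Sum.inl j)) => i.val + 1 = j.val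
    | Sum.inr (Sum.inr (Sum.inr i)), Sum.inr (Sum.inr (Sum.inr j)) => i.val + 1 = j.val
    | _, _ => False)

/-- The weight `w(P'_{4q+r}) = w(P''_{4q+r}) = 2q + c_r` with
`c_0 = 0`, `c_1 = 1`, `c_2 = 3/2`, `c_3 = 7/4`, as a function of `n = 4q + r`. -/
def pathWeight (n : ℕ) : ℚ :=
  2 * (n / 4 : ℕ) +
    (if n % 4 = 0 then 0 else if n % 4 = 1 then 1 else if n % 4 = 2 then 3/2 else 7/4)

section Continuation

variable [Fintype V] (G : SimpleGraph V)

lemma self_mem_closedNbr (x : V) : x ∈ closedNbr G x := by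
  simp [closedNbr]

lemma gameVal_of_forall_subset {S : Finset V} (h : ∀ x, closedNbr G x ⊆ S) (d : Bool) :
    gameVal G d S = 0 := by
  have hne : ¬ (univ.filter (fun y => ¬ closedNbr G y ⊆ S)).Nonempty := by
    simp only [filter_nonempty_iff, mem_univ, true_and, not_exists, not_not]
    exact h
  rw [gameVal.eq_1 G d S, dif_neg hne]

lemma gameVal_true_le {S : Finset V} {x : V} (hx : ¬ closedNbr G x ⊆ S) :
    gameVal G true S ≤ gameVal G false (S ∪ closedNbr G x) + 1 := by
  have hmem : x ∈ univ.filter (fun y => ¬ closedNbr G y ⊆ S) := by simpa using hx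
  rw [gameVal.eq_1 G true S, dif_pos ⟨x, hmem⟩, if_pos rfl, add_comm]
  exact inf'_le _ (mem_attach _ ⟨x, hmem⟩)

lemma exists_gameVal_true_eq {S : Finset V} (h : ∃ x, ¬ closedNbr G x ⊆ S) :
    ∃ x, ¬ closedNbr G x ⊆ S ∧ gameVal G true S = gameVal G false (S ∪ closedNbr G x) + 1 := by
  have hne : (univ.filter (fun y => ¬ closedNbr G y ⊆ S)).Nonempty := by
    simpa only [filter_nonempty_iff, mem_univ, true_and] using h
  obtain ⟨⟨x, hx⟩, -, heq⟩ := exists_mem_eq_inf' hne.attach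
    (fun y => 1 + gameVal G false (S ∪ closedNbr G y.1))
  refine ⟨x, (mem_filter.mp hx).2, ?_⟩
  rw [gameVal.eq_1 G true S, dif_pos hne, if_pos rfl, heq, add_comm]

lemma le_gameVal_false {S : Finset V} {x : V} (hx : ¬ closedNbr G x ⊆ S) :
    gameVal G true (S ∪ closedNbr G x) + 1 ≤ gameVal G false S := by
  have hmem : x ∈ univ.filter (fun y => ¬ closedNbr G y ⊆ S) := by simpa using hx
  rw [gameVal.eq_1 G false S, dif_pos ⟨x, hmem⟩, if_neg Bool.false_ne_true, add_comm]
  exact le_sup'_of_le _ (mem_attach _ ⟨x, hmem⟩) le_rfl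

lemma gameVal_false_le {S : Finset V} {m : ℕ}
    (h : ∀ x, ¬ closedNbr G x ⊆ S → gameVal G true (S ∪ closedNbr G x) + 1 ≤ m) :
    gameVal G false S ≤ m := by
  by_cases hS : ∀ x, closedNbr G x ⊆ S
  · rw [gameVal_of_forall_subset G hS]
    exact Nat.zero_le m
  have hne : (univ.filter (fun y => ¬ closedNbr G y ⊆ S)).Nonempty := by
    simpa only [filter_nonempty_iff, mem_univ, true_and, not_forall] using hS
  rw [gameVal.eq_1 G false S, dif_pos hne, if_neg Bool.false_ne_true]
  refine sup'_le _ _ fun y _ => ?_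
  rw [add_comm]
  exact h y (mem_filter.mp y.2).2

lemma card_univ_sdiff_union_le (S A : Finset V) : #(univ \ (S ∪ A)) ≤ #(univ \ S) :=
  card_le_card (sdiff_subset_sdiff le_rfl subset_union_left)

/-- Declaring more vertices dominated never lengthens the game, and even when the player to move
in `G|T` is not the one to move in `G|S`, it is longer by at most one move. -/
def ContinuationPrinciple (S T : Finset V) : Prop :=
  ∀ d, gameVal G d T ≤ gameVal G d S ∧ gameVal G d T ≤ gameVal G (!d) S + 1

def ContinuationBelow (n : ℕ) : Prop :=
  ∀ S T, S ⊆ T → #(univ \ S) + #(univ \ T) < n → ContinuationPrinciple G S T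

variable {G} {S T : Finset V}

lemma gameVal_true_mono_step (hST : S ⊆ T)
    (ih : ContinuationBelow G (#(univ \ S) + #(univ \ T))) :
    gameVal G true T ≤ gameVal G true S := by
  by_cases hS : ∀ x, closedNbr G x ⊆ S
  · rw [gameVal_of_forall_subset G fun x => (hS x).trans hST]
    exact Nat.zero_le _
  obtain ⟨x, hxS, hval⟩ := exists_gameVal_true_eq G (not_forall.mp hS)
  have hlt := card_compl_lt G hxS
  rw [hval]
  by_cases hxT : closedNbr G x ⊆ T
  · -- Dominator's optimal move in `G|S` is illegal in `G|T`: he passes there instead.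
    exact (ih _ _ (union_subset hST hxT) (by omega) true).2
  · have hle := card_univ_sdiff_union_le T (closedNbr G x)
    calc gameVal G true T ≤ gameVal G false (T ∪ closedNbr G x) + 1 := gameVal_true_le G hxT
      _ ≤ gameVal G false (S ∪ closedNbr G x) + 1 :=
        Nat.add_le_add_right
          (ih _ _ (union_subset_union hST le_rfl) (by omega) false).1 1

lemma gameVal_false_mono_step (hST : S ⊆ T)
    (ih : ContinuationBelow G (#(univ \ S) + #(univ \ T))) :
    gameVal G false T ≤ gameVal G false S := by
  refine gameVal_false_le G fun x hxT => ?_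
  have hxS : ¬ closedNbr G x ⊆ S := fun h => hxT (h.trans hST)
  have hlt := card_compl_lt G hxS
  have hle := card_univ_sdiff_union_le T (closedNbr G x)
  calc gameVal G true (T ∪ closedNbr G x) + 1 ≤ gameVal G true (S ∪ closedNbr G x) + 1 :=
        Nat.add_le_add_right
          (ih _ _ (union_subset_union hST le_rfl) (by omega) true).1 1
    _ ≤ gameVal G false S := le_gameVal_false G hxS

lemma gameVal_true_le_false_step (hST : S ⊆ T)
    (ih : ContinuationBelow G (#(univ \ S) + #(univ \ T))) :
    gameVal G true T ≤ gameVal G false S + 1 := by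
  by_cases hT : ∀ x, closedNbr G x ⊆ T
  · rw [gameVal_of_forall_subset G hT]
    exact Nat.zero_le _
  obtain ⟨x, hxT⟩ := not_forall.mp hT
  have hxS : ¬ closedNbr G x ⊆ S := fun h => hxT (h.trans hST)
  have hlt := card_compl_lt G hxS
  have hle := card_univ_sdiff_union_le T (closedNbr G x)
  calc gameVal G true T ≤ gameVal G false (T ∪ closedNbr G x) + 1 := gameVal_true_le G hxT
    _ ≤ gameVal G true (S ∪ closedNbr G x) + 1 + 1 :=
        Nat.add_le_add_right
          (ih _ _ (union_subset_union hST le_rfl) (by omega) false).2 1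
    _ ≤ gameVal G false S + 1 := Nat.add_le_add_right (le_gameVal_false G hxS) 1

lemma gameVal_false_le_true_step (hST : S ⊆ T)
    (ih : ContinuationBelow G (#(univ \ S) + #(univ \ T))) :
    gameVal G false T ≤ gameVal G true S + 1 := by
  refine gameVal_false_le G fun x hxT => ?_
  have hlt := card_compl_lt G hxT
  exact Nat.add_le_add_right
    (ih _ _ (hST.trans subset_union_left) (by omega) true).1 1

variable (G) in
theorem continuationPrinciple {S T : Finset V} (hST : S ⊆ T) : ContinuationPrinciple G S T := by
  have ih : ContinuationBelow G (#(univ \ S) + #(univ \ T)) :=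
    fun _ _ h _ => continuationPrinciple h
  rintro (_ | _)
  · exact ⟨gameVal_false_mono_step hST ih, gameVal_false_le_true_step hST ih⟩
  · exact ⟨gameVal_true_mono_step hST ih, gameVal_true_le_false_step hST ih⟩
termination_by #(univ \ S) + #(univ \ T)

end Continuation

/-- If `G` is domination-game critical, then `G` is a minus or an equal graph,
i.e. `γ_g′(G) ≤ γ_g(G)`. -/
theorem critical_not_plus {V : Type*} [Fintype V] (G : SimpleGraph V)
    (hcrit : ∀ v : V, gameVal G true {v} < gammaD G) :
    gammaS G ≤ gammaD G := by
  refine gameVal_false_le G fun x _ => ?_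
  have hsub : {x} ⊆ closedNbr G x := singleton_subset_iff.mpr (self_mem_closedNbr G x)
  calc gameVal G true (∅ ∪ closedNbr G x) + 1 = gameVal G true (closedNbr G x) + 1 := by
        rw [empty_union]
    _ ≤ gameVal G true {x} + 1 := Nat.add_le_add_right (continuationPrinciple G hsub true).1 1
    _ ≤ gammaD G := hcrit x

end

end DomGame
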